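/- (Generalized Mixed Discriminant Theorem.) Let A₁,…,Aₙ be d×d real symmetric matrices and let f(x) = det(I + x₁A₁ + ⋯ + xₙAₙ) ∈ ℝ[x₁,…,xₙ]. For any exponents k₁,…,kₙ ∈ {0,…,d} with k₁ + ⋯ + kₙ = k ≤ d, the coefficient of the monomial x₁^{k₁}x₂^{k₂}⋯xₙ^{kₙ} in f equals the generalized mixed discriminant Σ_φ det(M_φ), where the sum ranges over all functions φ : {1,…,d} → {0,1,…,n} with |φ⁻¹(i)| = kᵢ for each i = 1,…,n, and M_φ is the d×d matrix whose j-th row is the j-th row of A_{φ(j)} when φ(j) = i ≥ 1 and equals the j-th row of the identity matrix when φ(j) = 0. -/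

import Mathlib

open Matrix MvPolynomial Finset

/-!
Row `j` of `I + ∑ xᵢ Aᵢ` is the combination, with coefficients `c = (1, x₁, …, xₙ)`, of the
`j`-th rows of `I, A₁, …, Aₙ`. Expanding the determinant multilinearly in its rows writes it
as `∑_φ (∏_j c_{φ j}) det M_φ`, where `M_φ = rowMix (I, A₁, …, Aₙ) φ`, and `∏_j c_{φ j}` is
the monomial whose exponent of `xᵢ` is `|φ⁻¹(i)|`; so the coefficient of `x^k` collects
exactly the `φ` whose fibres have sizes `k`.
-/

namespace Matrix

variable {n ι R : Type*}

def rowMix (B : ι → Matrix n n R) (φ : n → ι) : Matrix n n R :=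
  of fun j => B (φ j) j

theorem rowMix_map {S : Type*} (B : ι → Matrix n n R) (f : R → S) (φ : n → ι) :
    rowMix (fun o => (B o).map f) φ = (rowMix B φ).map f :=
  rfl

theorem det_sum_smul [Fintype n] [DecidableEq n] [CommRing R] [Fintype ι] (c : ι → R)
    (B : ι → Matrix n n R) :
    det (∑ o, c o • B o) = ∑ φ : n → ι, (∏ j, c (φ j)) * det (rowMix B φ) :=
  calc det (∑ o, c o • B o)
      = detRowAlternating fun j => ∑ o, c o • (B o j : n → R) := by
        congr 1; ext j l; simp [Matrix.sum_apply]
    _ = ∑ φ : n → ι, detRowAlternating fun j => c (φ j) • (B (φ j) j : n → R) :=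
        MultilinearMap.map_sum _ _
    _ = _ := sum_congr rfl fun φ _ =>
        (detRowAlternating.map_smul_univ (fun j => c (φ j)) fun j => B (φ j) j).trans
          (smul_eq_mul ..)

end Matrix

theorem MvPolynomial.prod_option_elim_one_X {ι σ R : Type*} [Fintype ι] [Fintype σ]
    [DecidableEq σ] [CommSemiring R] (φ : ι → Option σ) :
    ∏ j, (φ j).elim 1 X = monomial (Finsupp.equivFunOnFinite.symm
      fun i => #{j | φ j = some i}) (1 : R) := by
  rw [← Finset.prod_fiberwise' univ φ fun o => o.elim 1 X, monomial_eq, C_1, one_mul,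
    Finsupp.prod_fintype _ _ fun _ => pow_zero _]
  simp [Fintype.prod_option]

theorem coeff_det_eq_generalized_mixed_discriminant_general (n d : ℕ)
    (A : Fin n → Matrix (Fin d) (Fin d) ℝ) (k : Fin n → ℕ) :
    MvPolynomial.coeff (Finsupp.equivFunOnFinite.symm k)
      (Matrix.det ((1 : Matrix (Fin d) (Fin d) (MvPolynomial (Fin n) ℝ)) +
        ∑ i : Fin n, (MvPolynomial.X i : MvPolynomial (Fin n) ℝ) • (A i).map MvPolynomial.C)) =
    ∑ φ ∈ Finset.univ.filter
        (fun φ : Fin d → Option (Fin n) =>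
          ∀ i : Fin n, (Finset.univ.filter (fun j : Fin d => φ j = some i)).card = k i),
      Matrix.det (Matrix.of fun j l : Fin d =>
        (φ j).elim ((1 : Matrix (Fin d) (Fin d) ℝ) j l) (fun i => A i j l)) := by
  have hsplit : (1 : Matrix (Fin d) (Fin d) (MvPolynomial (Fin n) ℝ)) +
      ∑ i, (X i : MvPolynomial (Fin n) ℝ) • (A i).map C =
        ∑ o : Option (Fin n), o.elim 1 (X (R := ℝ)) • (o.elim 1 A).map C := by
    simp [Fintype.sum_option, Matrix.map_one _ (map_zero C) (map_one C)]
  have hmix : ∀ φ : Fin d → Option (Fin n),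
      (of fun j l => (φ j).elim ((1 : Matrix (Fin d) (Fin d) ℝ) j l) (fun i => A i j l)) =
        rowMix (fun o => o.elim 1 A) φ := by
    intro φ; ext j l; simp only [rowMix, of_apply]; cases φ j <;> rfl
  rw [hsplit, det_sum_smul, coeff_sum, sum_filter]
  refine sum_congr rfl fun φ _ => ?_
  rw [hmix, rowMix_map, ← RingHom.mapMatrix_apply, ← RingHom.map_det, prod_option_elim_one_X,
    mul_comm, coeff_C_mul, coeff_monomial, mul_ite, mul_one, mul_zero]
  simp only [Equiv.apply_eq_iff_eq, funext_iff]

/-- Theorem 2.5 (paper), Generalized Mixed Discriminant Theorem: the coefficient of the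
monomial `x₁^{k₁} ⋯ xₙ^{kₙ}` (with `k₁ + ⋯ + kₙ = k ≤ d`) in the determinantal polynomial
`f(x) = det(I + x₁ A₁ + ⋯ + xₙ Aₙ)` equals the generalized mixed discriminant
`D̂(A₁,…,A₁ (k₁ times), …, Aₙ,…,Aₙ (kₙ times))`, expressed as the sum over row-assignments
`φ : Fin d → Option (Fin n)` with `|φ⁻¹ i| = kᵢ` of the determinant of the matrix whose
`j`-th row is the `j`-th row of `A_{φ j}` (of the identity matrix if `φ j = none`). -/
theorem coeff_det_eq_generalized_mixed_discriminant (n d : ℕ)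
    (A : Fin n → Matrix (Fin d) (Fin d) ℝ) (hA : ∀ i, (A i).IsSymm)
    (k : Fin n → ℕ) (hk : ∀ i, k i ≤ d) (hsum : ∑ i, k i ≤ d) :
    MvPolynomial.coeff (Finsupp.equivFunOnFinite.symm k)
      (Matrix.det ((1 : Matrix (Fin d) (Fin d) (MvPolynomial (Fin n) ℝ)) +
        ∑ i : Fin n, (MvPolynomial.X i : MvPolynomial (Fin n) ℝ) • (A i).map MvPolynomial.C)) =
    ∑ φ ∈ Finset.univ.filter
        (fun φ : Fin d → Option (Fin n) =>
          ∀ i : Fin n, (Finset.univ.filter (fun j : Fin d => φ j = some i)).card = k i),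
      Matrix.det (Matrix.of fun j l : Fin d =>
        (φ j).elim ((1 : Matrix (Fin d) (Fin d) ℝ) j l) (fun i => A i j l)) :=
  coeff_det_eq_generalized_mixed_discriminant_general n d A k
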